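/- arXiv:2110.07533 — 4 statements merged into one kernel-verified Lean document; each statement's English description precedes it below -/
import Mathlib

section
/- Let V be a 4-dimensional real symplectic vector space with complexification V_ℂ and complexified symplectic form ω. Let F ⊂ V_ℂ be a complex Lagrangian subspace with V_ℂ = F ⊕ F̄ (where bar is complex conjugation with respect to the real structure). Let L ⊂ V be a real Lagrangian subspace. Then L_ℂ ∩ F ≠ {0} if and only if there exists α ∈ F \ {0} with ω(α, ᾱ) = 0 and L_ℂ = span_ℂ(α, ᾱ). Moreover, in that case the intersection L_ℂ ∩ F is exactly the complex line ℂα. -/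
/-- Complexified standard symplectic form on ℂ⁴; coordinates 0,1,2,3
correspond to the symplectic basis e₁,e₂,f₁,f₂ (ω(eᵢ,fᵢ)=1). -/
def sympC (u v : Fin 4 → ℂ) : ℂ :=
  u 0 * v 2 - u 2 * v 0 + u 1 * v 3 - u 3 * v 1

/-- Inclusion of ℝ⁴ into its complexification ℂ⁴. -/
def coeC (v : Fin 4 → ℝ) : Fin 4 → ℂ := fun i => (v i : ℂ)

/-- Complexification L_ℂ of a real subspace L ⊂ ℝ⁴. -/
noncomputable def complexify (L : Submodule ℝ (Fin 4 → ℝ)) : Submodule ℂ (Fin 4 → ℂ) :=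
  Submodule.span ℂ (coeC '' (L : Set (Fin 4 → ℝ)))

/-- Complex conjugate F̄ of a complex subspace F ⊂ ℂ⁴ (conjugation with respect
to the real structure ℝ⁴ ⊂ ℂ⁴, i.e. entrywise conjugation). -/
noncomputable def conjSub (F : Submodule ℂ (Fin 4 → ℂ)) : Submodule ℂ (Fin 4 → ℂ) :=
  Submodule.span ℂ (star '' (F : Set (Fin 4 → ℂ)))

/- Auxiliary lemmas -/

lemma coeC_add (u v : Fin 4 → ℝ) : coeC (u + v) = coeC u + coeC v := by
  funext i; simp [coeC]

lemma coeC_smul (r : ℝ) (v : Fin 4 → ℝ) : coeC (r • v) = (r : ℂ) • coeC v := by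
  funext i; simp [coeC]

lemma star_coeC (v : Fin 4 → ℝ) : star (coeC v) = coeC v := by
  funext i; simp [coeC]

lemma mem_complexify {L : Submodule ℝ (Fin 4 → ℝ)} {v : Fin 4 → ℝ} (hv : v ∈ L) :
    coeC v ∈ complexify L :=
  Submodule.subset_span ⟨v, hv, rfl⟩

lemma star_mem_complexify (L : Submodule ℝ (Fin 4 → ℝ)) {x : Fin 4 → ℂ}
    (hx : x ∈ complexify L) : star x ∈ complexify L := by
  induction hx using Submodule.span_induction with
  | mem x hx =>
      obtain ⟨v, hv, rfl⟩ := hx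
      rw [star_coeC]; exact mem_complexify hv
  | zero => simpa using (complexify L).zero_mem
  | add x y _ _ hx hy => rw [star_add]; exact add_mem hx hy
  | smul c x _ hx => rw [star_smul]; exact Submodule.smul_mem _ _ hx

lemma sympC_add_left (x y v : Fin 4 → ℂ) : sympC (x + y) v = sympC x v + sympC y v := by
  simp only [sympC, Pi.add_apply]; ring

lemma sympC_smul_left (c : ℂ) (x v : Fin 4 → ℂ) : sympC (c • x) v = c * sympC x v := by
  simp only [sympC, Pi.smul_apply, smul_eq_mul]; ring

lemma sympC_add_right (u x y : Fin 4 → ℂ) : sympC u (x + y) = sympC u x + sympC u y := by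
  simp only [sympC, Pi.add_apply]; ring

lemma sympC_smul_right (c : ℂ) (u x : Fin 4 → ℂ) : sympC u (c • x) = c * sympC u x := by
  simp only [sympC, Pi.smul_apply, smul_eq_mul]; ring

lemma sympC_zero_left (v : Fin 4 → ℂ) : sympC 0 v = 0 := by simp [sympC]

lemma sympC_zero_right (u : Fin 4 → ℂ) : sympC u 0 = 0 := by simp [sympC]

lemma sympC_complexify (L : Submodule ℝ (Fin 4 → ℝ))
    (hLLag : ∀ u ∈ L, ∀ v ∈ L, sympC (coeC u) (coeC v) = 0) :
    ∀ u ∈ complexify L, ∀ v ∈ complexify L, sympC u v = 0 := by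
  intro u hu
  have key : ∀ w ∈ L, sympC u (coeC w) = 0 := by
    intro w hw
    induction hu using Submodule.span_induction with
    | mem x hx =>
        obtain ⟨a, ha, rfl⟩ := hx
        exact hLLag a ha w hw
    | zero => exact sympC_zero_left _
    | add x y _ _ hx hy => rw [sympC_add_left, hx, hy, add_zero]
    | smul c x _ hx => rw [sympC_smul_left, hx, mul_zero]
  intro v hv
  induction hv using Submodule.span_induction with
  | mem x hx =>
      obtain ⟨w, hw, rfl⟩ := hx
      exact key w hw
  | zero => exact sympC_zero_right _
  | add x y _ _ hx hy => rw [sympC_add_right, hx, hy, add_zero]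
  | smul c x _ hx => rw [sympC_smul_right, hx, mul_zero]

/-- `coeC` as an ℝ-linear map. -/
noncomputable def coeCL : (Fin 4 → ℝ) →ₗ[ℝ] (Fin 4 → ℂ) where
  toFun := coeC
  map_add' := coeC_add
  map_smul' := fun r v => by
    simp only [RingHom.id_apply, coeC_smul]
    funext i
    simp [Complex.real_smul]

lemma finrank_complexify_le (L : Submodule ℝ (Fin 4 → ℝ))
    (hL2 : Module.finrank ℝ L = 2) :
    Module.finrank ℂ (complexify L) ≤ 2 := by
  have : FiniteDimensional ℝ L := inferInstance
  let b := Module.finBasis ℝ L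
  let f : Fin (Module.finrank ℝ L) → (Fin 4 → ℂ) := fun i => coeC (b i)
  have hle : complexify L ≤ Submodule.span ℂ (Set.range f) := by
    rw [complexify, Submodule.span_le]
    rintro _ ⟨v, hv, rfl⟩
    set c : Fin (Module.finrank ℝ L) → ℝ := fun i => b.repr ⟨v, hv⟩ i with hc
    have hv' : (⟨v, hv⟩ : L) = ∑ i, c i • b i := (b.sum_repr _).symm
    have hv2 : v = ∑ i, c i • ((b i : L) : Fin 4 → ℝ) := by
      have := congrArg (Subtype.val) hv'
      simpa using this
    have : coeC v = ∑ i, ((c i : ℝ) : ℂ) • f i := by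
      rw [hv2]
      show coeCL (∑ i, c i • ((b i : L) : Fin 4 → ℝ)) = _
      rw [map_sum]
      refine Finset.sum_congr rfl fun i _ => ?_
      show coeCL (c i • ((b i : L) : Fin 4 → ℝ)) = _
      rw [map_smul]
      funext j
      simp [coeCL, coeC, Complex.real_smul, f]
    rw [this]
    exact Submodule.sum_mem _ fun i _ =>
      Submodule.smul_mem _ _ (Submodule.subset_span ⟨i, rfl⟩)
  calc Module.finrank ℂ (complexify L)
      ≤ Module.finrank ℂ (Submodule.span ℂ (Set.range f)) := Submodule.finrank_mono hle
    _ ≤ Fintype.card (Fin (Module.finrank ℝ L)) := finrank_range_le_card f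
    _ = 2 := by simp [hL2]

lemma star_mem_conjSub {F : Submodule ℂ (Fin 4 → ℂ)} {x : Fin 4 → ℂ} (hx : x ∈ F) :
    star x ∈ conjSub F :=
  Submodule.subset_span ⟨x, hx, rfl⟩

/-- Let F be a complex Lagrangian of ℂ⁴ with ℂ⁴ = F ⊕ F̄ and L a real Lagrangian
of ℝ⁴.  Then L_ℂ ∩ F ≠ 0 iff there is α ∈ F∖{0} with ω(α, ᾱ) = 0 and
L_ℂ = span_ℂ(α, ᾱ); moreover in that case L_ℂ ∩ F = ℂ·α. -/
theorem bad_lagrangians_form_electron (F : Submodule ℂ (Fin 4 → ℂ))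
    (hF2 : Module.finrank ℂ F = 2)
    (hFLag : ∀ u ∈ F, ∀ v ∈ F, sympC u v = 0)
    (hdisj : F ⊓ conjSub F = ⊥) (hspan : F ⊔ conjSub F = ⊤)
    (L : Submodule ℝ (Fin 4 → ℝ)) (hL2 : Module.finrank ℝ L = 2)
    (hLLag : ∀ u ∈ L, ∀ v ∈ L, sympC (coeC u) (coeC v) = 0) :
    (complexify L ⊓ F ≠ ⊥ ↔
      ∃ α, α ∈ F ∧ α ≠ 0 ∧ sympC α (star α) = 0 ∧
        complexify L = Submodule.span ℂ {α, star α}) ∧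
    (∀ α, α ∈ F → α ≠ 0 → sympC α (star α) = 0 →
      complexify L = Submodule.span ℂ {α, star α} →
      complexify L ⊓ F = Submodule.span ℂ {α}) := by
  -- helper: if star α ∈ F and α ∈ F with α ≠ 0 then contradiction
  have hstar_not_in_F : ∀ α : Fin 4 → ℂ, α ∈ F → α ≠ 0 → star α ∉ F := by
    intro α hαF hα0 hsF
    have h1 : star α ∈ F ⊓ conjSub F := ⟨hsF, star_mem_conjSub hαF⟩
    rw [hdisj, Submodule.mem_bot] at h1
    exact hα0 (by simpa using congrArg star h1)
  constructor
  · constructor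
    · -- forward direction
      intro hne
      obtain ⟨α, hαmem, hα0⟩ := (complexify L ⊓ F).ne_bot_iff.1 hne
      obtain ⟨hαL, hαF⟩ := hαmem
      have hsL : star α ∈ complexify L := star_mem_complexify L hαL
      refine ⟨α, hαF, hα0, sympC_complexify L hLLag α hαL (star α) hsL, ?_⟩
      -- linear independence of α, star α
      have hindep : LinearIndependent ℂ ![α, star α] := by
        rw [LinearIndependent.pair_iff' hα0]
        intro a ha
        exact hstar_not_in_F α hαF hα0 (ha ▸ F.smul_mem a hαF)
      have hfr : Module.finrank ℂ (Submodule.span ℂ ({α, star α} : Set (Fin 4 → ℂ))) = 2 := by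
        rw [← Matrix.range_cons_cons_empty α (star α) ![]]
        rw [finrank_span_eq_card hindep]
        simp
      have hle : Submodule.span ℂ ({α, star α} : Set (Fin 4 → ℂ)) ≤ complexify L := by
        rw [Submodule.span_le]
        rintro x (rfl | rfl)
        · exact hαL
        · exact hsL
      exact (Submodule.eq_of_le_of_finrank_le hle
        (by rw [hfr]; exact finrank_complexify_le L hL2)).symm
    · -- backward direction
      rintro ⟨α, hαF, hα0, _, hLeq⟩ hbot
      have : α ∈ complexify L ⊓ F := by
        refine ⟨?_, hαF⟩
        rw [hLeq]
        exact Submodule.subset_span (Set.mem_insert _ _)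
      rw [hbot, Submodule.mem_bot] at this
      exact hα0 this
  · -- moreover part
    intro α hαF hα0 _ hLeq
    apply le_antisymm
    · rintro x ⟨hxL, hxF⟩
      rw [hLeq] at hxL
      obtain ⟨a, c, rfl⟩ := Submodule.mem_span_pair.1 hxL
      have hc : c = 0 := by
        by_contra hc
        have h1 : c • star α ∈ F := by
          have := F.sub_mem hxF (F.smul_mem a hαF)
          simpa [add_sub_cancel_left] using this
        have h2 : star α ∈ F := by
          have := F.smul_mem c⁻¹ h1
          rwa [smul_smul, inv_mul_cancel₀ hc, one_smul] at this
        exact hstar_not_in_F α hαF hα0 h2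
      rw [hc, zero_smul, add_zero]
      exact Submodule.smul_mem _ _ (Submodule.mem_span_singleton_self α)
    · rw [Submodule.span_le, Set.singleton_subset_iff]
      refine ⟨?_, hαF⟩
      rw [hLeq]
      exact Submodule.subset_span (Set.mem_insert _ _)
end

section
/- Let V be a finite-dimensional real inner product space with orthogonal decomposition V = ⊕_{i=−d}^{d} V_i, and let N : V → V be linear with N(V_i) ⊆ V_{i−2} (so N^{d+1}=0) and with N^d : V_d → V_{−d} an isometric isomorphism. Set T = e^N. Then there exists a constant C > 0 (depending only on N and d) with the following property: if ξ ⊂ V is a linear subspace, k ≥ 1 an integer, t > 0, and v ∈ V a unit vector such that ‖T^k v‖ ≥ e^t ‖T^k w‖ for every unit vector w ∈ ξ, then every unit vector w ∈ ξ satisfies ‖w_d‖ ≤ C·max(1/k, e^{−t}), where w_d denotes the orthogonal projection of w to V_d. Equivalently, the distance from any unit vector of ξ to the subspace W_{d−1} := ⊕_{i<d} V_i is at most C·max(1/k, e^{−t}). -/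
open scoped RealInnerProductSpace Nat
open Finset Real

/-!
Orthogonality of the grading and `N^d V_i ⊆ V_{i-2d} = 0` for `i ≠ d` make `N^d` factor through
the projection `u ↦ u_d`, isometrically: `‖N^d u‖ = ‖u_d‖`. Expanding `T^k = ∑_{j ≤ d} k^j/j! N^j`
and keeping the top term gives `‖T^k u‖ = (k^d/d!) ‖u_d‖ + O(k^{d-1} ‖u‖)` and `‖T^k v‖ = O(k^d)`.
For a unit `w ∈ ξ` the domination hypothesis thus yields
`(k^d/d!) ‖w_d‖ ≤ O(k^{d-1}) + e^{-t} O(k^d)`, i.e. `‖w_d‖ = O(1/k + e^{-t})`.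
-/

section TruncatedExponential

variable {E : Type*} [NormedAddCommGroup E] [NormedSpace ℝ E] [FiniteDimensional ℝ E]

/-- `exp (s • N)` when `N ^ (d + 1) = 0`. -/
noncomputable def truncExp (N : E →ₗ[ℝ] E) (d : ℕ) (s : ℝ) : E →ₗ[ℝ] E :=
  ∑ j ∈ range (d + 1), (s ^ j / j !) • N ^ j

omit [FiniteDimensional ℝ E] in
theorem truncExp_apply (N : E →ₗ[ℝ] E) (d : ℕ) (s : ℝ) (u : E) :
    truncExp N d s u = ∑ j ∈ range (d + 1), (s ^ j / j !) • (N ^ j) u := by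
  simp [truncExp, LinearMap.sum_apply]

theorem norm_sum_range_pow_smul_apply_le (N : E →ₗ[ℝ] E) (n : ℕ) {s : ℝ} (hs : 1 ≤ s) (u : E) :
    ‖∑ j ∈ range n, (s ^ j / j !) • (N ^ j) u‖ ≤
      (∑ j ∈ range n, ‖(N ^ j).toContinuousLinearMap‖ / j !) * (s ^ n / s) * ‖u‖ := by
  rw [sum_mul, sum_mul]
  refine (norm_sum_le _ _).trans (sum_le_sum fun j hj => ?_)
  have hsj : s ^ j ≤ s ^ n / s := by
    rw [le_div_iff₀ (by linarith), ← pow_succ]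
    exact pow_le_pow_right₀ hs (mem_range.1 hj)
  have hNj : ‖(N ^ j) u‖ ≤ ‖(N ^ j).toContinuousLinearMap‖ * ‖u‖ :=
    (N ^ j).toContinuousLinearMap.le_opNorm u
  rw [norm_smul, Real.norm_of_nonneg (by positivity)]
  calc s ^ j / j ! * ‖(N ^ j) u‖
      ≤ s ^ j / j ! * (‖(N ^ j).toContinuousLinearMap‖ * ‖u‖) := by gcongr
    _ ≤ s ^ n / s / j ! * (‖(N ^ j).toContinuousLinearMap‖ * ‖u‖) := by gcongr
    _ = _ := by ring

theorem exists_norm_truncExp_apply_le (N : E →ₗ[ℝ] E) (d : ℕ) :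
    ∃ B ≥ 0, ∀ s ≥ 1, ∀ u, ‖truncExp N d s u‖ ≤ B * s ^ d * ‖u‖ := by
  refine ⟨∑ j ∈ range (d + 1), ‖(N ^ j).toContinuousLinearMap‖ / j !,
    sum_nonneg fun j _ => by positivity, fun s hs u => ?_⟩
  have h := norm_sum_range_pow_smul_apply_le N (d + 1) hs u
  rwa [pow_succ, mul_div_cancel_right₀ _ (by linarith), ← truncExp_apply] at h

theorem exists_norm_truncExp_apply_sub_le (N : E →ₗ[ℝ] E) (d : ℕ) :
    ∃ A ≥ 0, ∀ s ≥ 1, ∀ u,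
      ‖truncExp N d s u - (s ^ d / d !) • (N ^ d) u‖ ≤ A * (s ^ d / s) * ‖u‖ := by
  refine ⟨∑ j ∈ range d, ‖(N ^ j).toContinuousLinearMap‖ / j !,
    sum_nonneg fun j _ => by positivity, fun s hs u => ?_⟩
  rw [truncExp_apply, sum_range_succ, add_sub_cancel_right]
  exact norm_sum_range_pow_smul_apply_le N d hs u

end TruncatedExponential

section Graded

variable {R M : Type*} [Semiring R] [AddCommMonoid M] [Module R M]
  {V : ℤ → Submodule R M} {N : M →ₗ[R] M}

theorem map_pow_le_of_map_le {a : ℤ} (hN : ∀ i, (V i).map N ≤ V (i - a)) (j : ℕ) (i : ℤ) :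
    (V i).map (N ^ j) ≤ V (i - j * a) := by
  induction j generalizing i with
  | zero => simp [Module.End.one_eq_id, Submodule.map_id]
  | succ j ih =>
    rw [pow_succ, Module.End.mul_eq_comp, Submodule.map_comp]
    calc ((V i).map N).map (N ^ j) ≤ (V (i - a)).map (N ^ j) := Submodule.map_mono (hN i)
      _ ≤ V (i - ((j + 1 : ℕ) : ℤ) * a) := by
        convert ih (i - a) using 2
        push_cast; ring

theorem le_ker_pow_of_ne {d : ℕ} (hsupp : ∀ i : ℤ, (d : ℤ) < |i| → V i = ⊥)
    (hN : ∀ i, (V i).map N ≤ V (i - 2)) {i : ℤ} (hi : i ≠ d) :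
    V i ≤ LinearMap.ker (N ^ d) := by
  rcases lt_or_gt_of_ne hi with hlt | hgt
  · have hbot : V (i - d * 2) = ⊥ := hsupp _ (by rw [abs_of_neg (by omega)]; omega)
    rw [LinearMap.le_ker_iff_map, eq_bot_iff, ← hbot]
    exact map_pow_le_of_map_le hN d i
  · rw [hsupp i (by rw [abs_of_pos (by omega)]; exact hgt)]
    exact bot_le

end Graded

theorem Submodule.orthogonal_eq_iSup_ne {𝕜 E ι : Type*} [RCLike 𝕜] [NormedAddCommGroup E]
    [InnerProductSpace 𝕜 E] {V : ι → Submodule 𝕜 E} (hsup : ⨆ i, V i = ⊤)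
    (horth : ∀ i j, i ≠ j → ∀ x ∈ V i, ∀ y ∈ V j, inner 𝕜 x y = 0) (j : ι) :
    (V j)ᗮ = ⨆ i : {i // i ≠ j}, V i := by
  symm
  refine eq_of_le_of_inf_le_of_sup_le (z := V j) ?_ ?_ ?_
  · exact iSup_le fun i x hx => (mem_orthogonal _ x).2 fun y hy => horth _ _ (Ne.symm i.2) y hy x hx
  · rw [inf_comm, inf_orthogonal_eq_bot]
    exact bot_le
  · refine le_top.trans (hsup.symm.trans_le (iSup_le fun i => ?_))
    by_cases hi : i = j
    · exact hi ▸ le_sup_right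
    · exact (le_iSup (fun i : {i // i ≠ j} => V i) ⟨i, hi⟩).trans le_sup_left

theorem norm_pow_apply_eq_norm_orthogonalProjectionOnto {V : Type*} [NormedAddCommGroup V]
    [InnerProductSpace ℝ V] [FiniteDimensional ℝ V] {d : ℕ} {Vsub : ℤ → Submodule ℝ V}
    (hsupp : ∀ i : ℤ, (d : ℤ) < |i| → Vsub i = ⊥) (hsup : ⨆ i, Vsub i = ⊤)
    (horth : ∀ i j : ℤ, i ≠ j → ∀ x ∈ Vsub i, ∀ y ∈ Vsub j, ⟪x, y⟫ = 0)
    {N : V →ₗ[ℝ] V} (hN : ∀ i : ℤ, (Vsub i).map N ≤ Vsub (i - 2))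
    (hiso : ∀ x ∈ Vsub (d : ℤ), ‖(N ^ d) x‖ = ‖x‖) (u : V) :
    ‖(N ^ d) u‖ = ‖(Submodule.orthogonalProjectionOnto (Vsub (d : ℤ)) u : V)‖ := by
  have hker : (Vsub (d : ℤ))ᗮ ≤ LinearMap.ker (N ^ d) := by
    rw [Submodule.orthogonal_eq_iSup_ne hsup horth]
    exact iSup_le fun i => le_ker_pow_of_ne hsupp hN i.2
  have hu : (N ^ d) (u - (Vsub (d : ℤ)).starProjection u) = 0 :=
    hker (Submodule.sub_starProjection_mem_orthogonal u)
  rw [map_sub, sub_eq_zero] at hu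
  rw [hu]
  exact hiso _ (Submodule.coe_mem _)

theorem control_of_planes_under_unipotent_domination_general
    {V : Type*} [NormedAddCommGroup V] [InnerProductSpace ℝ V]
    [FiniteDimensional ℝ V] (d : ℕ) (Vsub : ℤ → Submodule ℝ V)
    (hsupp : ∀ i : ℤ, (d : ℤ) < |i| → Vsub i = ⊥)
    (hsup : ⨆ i, Vsub i = ⊤)
    (horth : ∀ i j : ℤ, i ≠ j → ∀ x ∈ Vsub i, ∀ y ∈ Vsub j, ⟪x, y⟫ = 0)
    (N : V →ₗ[ℝ] V)
    (hN : ∀ i : ℤ, (Vsub i).map N ≤ Vsub (i - 2))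
    (hiso : ∀ x ∈ Vsub (d : ℤ), ‖(N ^ d) x‖ = ‖x‖) :
    ∃ C > 0, ∀ (ξ : Submodule ℝ V) (k : ℕ) (t : ℝ) (v : V),
      1 ≤ k → 0 < t → ‖v‖ = 1 →
      (∀ w ∈ ξ, ‖w‖ = 1 →
        Real.exp t * ‖(∑ j ∈ Finset.range (d + 1),
            ((k : ℝ) ^ j / (Nat.factorial j : ℝ)) • N ^ j) w‖
          ≤ ‖(∑ j ∈ Finset.range (d + 1),
            ((k : ℝ) ^ j / (Nat.factorial j : ℝ)) • N ^ j) v‖) →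
      ∀ w ∈ ξ, ‖w‖ = 1 →
        ‖(Submodule.orthogonalProjectionOnto (Vsub (d : ℤ)) w : V)‖
          ≤ C * max (1 / (k : ℝ)) (Real.exp (-t)) := by
  obtain ⟨A, hA0, hA⟩ := exists_norm_truncExp_apply_sub_le N d
  obtain ⟨B, hB0, hB⟩ := exists_norm_truncExp_apply_le N d
  refine ⟨d ! * (A + B) + 1, by positivity, fun ξ k t v hk _ hv hdom w hw hw1 => ?_⟩
  have hk1 : (1 : ℝ) ≤ k := by exact_mod_cast hk
  set m := max (1 / (k : ℝ)) (exp (-t))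
  have hTw : ‖truncExp N d k w‖ ≤ exp (-t) * (B * k ^ d) := by
    rw [exp_neg, ← div_eq_inv_mul, le_div_iff₀' (exp_pos t)]
    have h := (hdom w hw hw1).trans (hB k hk1 v)
    rwa [hv, mul_one] at h
  have htop : k ^ d / d ! * ‖(N ^ d) w‖ ≤ ‖truncExp N d k w‖ + A * (k ^ d / k) := by
    have h := norm_le_norm_add_norm_sub (truncExp N d k w) ((k ^ d / d ! : ℝ) • (N ^ d) w)
    rw [norm_smul, Real.norm_of_nonneg (by positivity)] at h
    have hrest := hA k hk1 w
    rw [hw1, mul_one] at hrest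
    linarith
  rw [← norm_pow_apply_eq_norm_orthogonalProjectionOnto hsupp hsup horth hN hiso]
  calc ‖(N ^ d) w‖ = d ! / k ^ d * (k ^ d / d ! * ‖(N ^ d) w‖) := by field_simp
    _ ≤ d ! / k ^ d * (exp (-t) * (B * k ^ d) + A * (k ^ d / k)) := by gcongr; linarith
    _ = d ! * (A * (1 / k) + B * exp (-t)) := by field_simp; ring
    _ ≤ d ! * (A * m + B * m) := by gcongr <;> simp [m]
    _ = d ! * (A + B) * m := by ring
    _ ≤ (d ! * (A + B) + 1) * m := by gcongr; linarith

/-- Let V = ⊕_{i=-d}^{d} V_i be an orthogonal decomposition of a finite-dimensional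
real inner product space, N : V → V with N(V_i) ⊆ V_{i−2} and with
N^d : V_d → V_{−d} an isometric isomorphism, and T^k = e^{kN}.  Then there is C > 0
such that: if ξ is a subspace, k ≥ 1, t > 0, and v is a unit vector with
‖T^k v‖ ≥ e^t ‖T^k w‖ for every unit vector w ∈ ξ, then every unit vector w ∈ ξ
satisfies ‖w_d‖ ≤ C·max(1/k, e^{−t}), where w_d is the orthogonal projection
of w to V_d. -/
theorem control_of_planes_under_unipotent_domination
    {V : Type*} [NormedAddCommGroup V] [InnerProductSpace ℝ V]
    [FiniteDimensional ℝ V] (d : ℕ) (Vsub : ℤ → Submodule ℝ V)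
    (hsupp : ∀ i : ℤ, (d : ℤ) < |i| → Vsub i = ⊥)
    (hsup : ⨆ i, Vsub i = ⊤)
    (horth : ∀ i j : ℤ, i ≠ j → ∀ x ∈ Vsub i, ∀ y ∈ Vsub j, ⟪x, y⟫ = 0)
    (N : V →ₗ[ℝ] V)
    (hN : ∀ i : ℤ, (Vsub i).map N ≤ Vsub (i - 2))
    (hiso : ∀ x ∈ Vsub (d : ℤ), ‖(N ^ d) x‖ = ‖x‖)
    (hsurj : (Vsub (d : ℤ)).map (N ^ d) = Vsub (-(d : ℤ))) :
    ∃ C > 0, ∀ (ξ : Submodule ℝ V) (k : ℕ) (t : ℝ) (v : V),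
      1 ≤ k → 0 < t → ‖v‖ = 1 →
      (∀ w ∈ ξ, ‖w‖ = 1 →
        Real.exp t * ‖(∑ j ∈ Finset.range (d + 1),
            ((k : ℝ) ^ j / (Nat.factorial j : ℝ)) • N ^ j) w‖
          ≤ ‖(∑ j ∈ Finset.range (d + 1),
            ((k : ℝ) ^ j / (Nat.factorial j : ℝ)) • N ^ j) v‖) →
      ∀ w ∈ ξ, ‖w‖ = 1 →
        ‖(Submodule.orthogonalProjectionOnto (Vsub (d : ℤ)) w : V)‖
          ≤ C * max (1 / (k : ℝ)) (Real.exp (-t)) :=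
  control_of_planes_under_unipotent_domination_general d Vsub hsupp hsup horth N hN hiso
end

section
/- Let f : ℝⁿ → ℝ be a C¹ function with f ≥ 0 and suppose there is ε > 0 with ‖∇f(x)‖² ≥ ε·f(x) for all x. Let γ : [0,∞) → ℝⁿ be a C¹ curve solving γ'(t) = −∇f(γ(t)). Then: (1) f(γ(t)) ≤ f(γ(0))·e^{−εt} for all t ≥ 0; and (2) the total length of γ is finite, with ∫₀^∞ ‖γ'(t)‖ dt ≤ C·√(f(γ(0))) where one may take C = (1 − e^{−ε})^{1/2} / (1 − e^{−ε/2}). -/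
/-!
Along the flow, `F = f ∘ γ` satisfies `F' = -‖∇f(γ)‖² ≤ -ε F`, which gives the exponential decay.
For the length, `‖γ'‖ = ‖∇f(γ)‖ ≥ √(ε F)` gives `-(√F)' = ‖γ'‖² / (2 √F) ≥ (√ε / 2) ‖γ'‖`, so the
length is at most `2 √(F 0 / ε)`; to keep the square root differentiable where `F` vanishes, `F`
is replaced by `F + δ e^{-εt}` and `δ → 0`. Finally `2 / √ε` is below the stated constant: after
squaring this is `tanh (ε / 4) ≤ ε / 4`.
-/

open MeasureTheory Real Set Filter Topology

theorem two_mul_one_sub_exp_neg_le_mul_one_add_exp_neg {s : ℝ} (hs : 0 ≤ s) :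
    2 * (1 - exp (-s)) ≤ s * (1 + exp (-s)) := by
  have hexp : ∀ x, HasDerivAt (fun x => exp (-x)) (-exp (-x)) x := fun x =>
    (hasDerivAt_neg' x).exp.congr_deriv (by ring)
  have hderiv : ∀ x, HasDerivAt (fun s => s * (1 + exp (-s)) - 2 * (1 - exp (-s)))
      (1 - (x + 1) * exp (-x)) x := fun x =>
    (((hasDerivAt_id' x).fun_mul ((hexp x).const_add 1)).sub
      (((hexp x).const_sub 1).const_mul 2)).congr_deriv (by ring)
  have hderiv_nonneg : ∀ x, 0 ≤ 1 - (x + 1) * exp (-x) := fun x => by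
    rw [sub_nonneg, exp_neg, ← div_eq_mul_inv, div_le_one (exp_pos x)]
    exact add_one_le_exp x
  simpa using monotone_of_hasDerivAt_nonneg hderiv hderiv_nonneg hs

theorem two_div_sqrt_le_sqrt_one_sub_exp_neg_div {ε : ℝ} (hε : 0 < ε) :
    2 / √ε ≤ √(1 - exp (-ε)) / (1 - exp (-ε / 2)) := by
  have htanh := two_mul_one_sub_exp_neg_le_mul_one_add_exp_neg (s := ε / 2) (by positivity)
  rw [← neg_div] at htanh
  set q := exp (-ε / 2)
  have hq : q < 1 := exp_lt_one_iff.2 (by linarith)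
  have hq2 : exp (-ε) = q ^ 2 := by rw [← exp_nat_mul]; ring_nf
  rw [div_le_div_iff₀ (sqrt_pos.2 hε) (by linarith), ← sqrt_mul' _ hε.le,
    le_sqrt (by linarith) (by nlinarith), hq2]
  nlinarith

theorem HasGradientAt.hasDerivAt_comp {E : Type*} [NormedAddCommGroup E] [InnerProductSpace ℝ E]
    [CompleteSpace E] {f : E → ℝ} {g v : E} {γ : ℝ → E} {t : ℝ}
    (hf : HasGradientAt f g (γ t)) (hγ : HasDerivAt γ v t) :
    HasDerivAt (fun s => f (γ s)) (inner ℝ g v) t :=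
  (hf.hasFDerivAt.comp_hasDerivAt t hγ).congr_deriv (InnerProductSpace.toDual_apply_apply ..)

theorem le_mul_exp_neg_of_hasDerivAt_le {F F' : ℝ → ℝ} {ε : ℝ}
    (hF : ∀ t, 0 ≤ t → HasDerivAt F (F' t) t) (hF' : ∀ t, 0 ≤ t → F' t ≤ -ε * F t)
    {t : ℝ} (ht : 0 ≤ t) : F t ≤ F 0 * exp (-ε * t) := by
  have hderiv : ∀ s, 0 ≤ s →
      HasDerivAt (fun s => F s * exp (ε * s)) ((F' s + ε * F s) * exp (ε * s)) s := fun s hs =>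
    ((hF s hs).fun_mul ((hasDerivAt_id' s).const_mul ε).exp).congr_deriv (by ring)
  have hanti : AntitoneOn (fun s => F s * exp (ε * s)) (Ici 0) := by
    refine antitoneOn_of_hasDerivWithinAt_nonpos (convex_Ici 0)
      (fun s hs => (hderiv s hs).continuousAt.continuousWithinAt)
      (fun s hs => (hderiv s (interior_subset hs)).hasDerivWithinAt) fun s hs => ?_
    have := hF' s (interior_subset hs)
    exact mul_nonpos_of_nonpos_of_nonneg (by linarith) (exp_pos _).le
  have h := hanti self_mem_Ici ht ht
  simp only [mul_zero, exp_zero, mul_one] at h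
  calc F t = F t * exp (ε * t) * exp (-ε * t) := by
        rw [mul_assoc, ← exp_add, neg_mul, add_neg_cancel, exp_zero, mul_one]
    _ ≤ F 0 * exp (-ε * t) := mul_le_mul_of_nonneg_right h (exp_pos _).le

theorem ContDiff.continuous_gradient {E : Type*} [NormedAddCommGroup E] [InnerProductSpace ℝ E]
    [CompleteSpace E] {f : E → ℝ} (hf : ContDiff ℝ 1 f) : Continuous (gradient f) :=
  (InnerProductSpace.toDual ℝ E).symm.continuous.comp (hf.continuous_fderiv one_ne_zero)

section Lojasiewicz

variable {F G : ℝ → ℝ} {ε a b : ℝ}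

theorem sqrt_mul_integral_le_sqrt_add_of_hasDerivAt_neg_sq (hε : 0 < ε) (hab : a ≤ b)
    (hF : ∀ t ∈ Icc a b, HasDerivAt F (-G t ^ 2) t) (hF0 : ∀ t ∈ Icc a b, 0 ≤ F t)
    (hsteep : ∀ t ∈ Icc a b, ε * F t ≤ G t ^ 2) (hG : IntegrableOn G (Icc a b))
    {δ : ℝ} (hδ : 0 < δ) :
    √ε / 2 * ∫ t in a..b, G t ≤ √(F a + δ * exp (-ε * a)) := by
  set u : ℝ → ℝ := fun t => F t + δ * exp (-ε * t)
  set w : ℝ → ℝ := fun t => G t ^ 2 + ε * (δ * exp (-ε * t))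
  have hu_pos : ∀ t ∈ Icc a b, 0 < u t := fun t ht =>
    add_pos_of_nonneg_of_pos (hF0 t ht) (mul_pos hδ (exp_pos _))
  have hu : ∀ t ∈ Icc a b, HasDerivAt u (-w t) t := fun t ht =>
    ((hF t ht).add (((hasDerivAt_id' t).const_mul (-ε)).exp.const_mul δ)).congr_deriv (by ring)
  have hsqrt : ∀ t ∈ Icc a b, HasDerivAt (fun t => -√(u t)) (w t / (2 * √(u t))) t :=
    fun t ht => ((hu t ht).sqrt (hu_pos t ht).ne').neg.congr_deriv (by ring)
  -- `w` dominates both `G ^ 2` and `ε * u`, hence their geometric mean `√ε * |G| * √u`.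
  have hpointwise : ∀ t ∈ Icc a b, √ε / 2 * G t ≤ w t / (2 * √(u t)) := fun t ht => by
    have hw : G t ^ 2 ≤ w t ∧ ε * u t ≤ w t := by
      constructor <;> nlinarith [hsteep t ht, mul_pos hε (mul_pos hδ (exp_pos (-ε * t)))]
    have hsq : (√ε * G t * √(u t)) ^ 2 ≤ w t ^ 2 := by
      rw [mul_pow, mul_pow, sq_sqrt hε.le, sq_sqrt (hu_pos t ht).le]
      nlinarith [sq_nonneg (G t), (hu_pos t ht)]
    have := (le_abs_self _).trans (abs_le_of_sq_le_sq hsq ((sq_nonneg _).trans hw.1))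
    rw [le_div_iff₀ (by positivity [sqrt_pos.2 (hu_pos t ht)])]
    linarith
  calc √ε / 2 * ∫ t in a..b, G t = ∫ t in a..b, √ε / 2 * G t :=
        (intervalIntegral.integral_const_mul _ _).symm
    _ ≤ -√(u b) - -√(u a) :=
        intervalIntegral.integral_le_sub_of_hasDeriv_right_of_le hab
          (fun t ht => (hsqrt t ht).continuousAt.continuousWithinAt)
          (fun t ht => (hsqrt t (Ioo_subset_Icc_self ht)).hasDerivWithinAt) (hG.const_mul _)
          fun t ht => hpointwise t (Ioo_subset_Icc_self ht)
    _ ≤ √(u a) := by linarith [sqrt_nonneg (u b)]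

theorem integral_le_two_div_sqrt_mul_sqrt_of_hasDerivAt_neg_sq (hε : 0 < ε) (hab : a ≤ b)
    (hF : ∀ t ∈ Icc a b, HasDerivAt F (-G t ^ 2) t) (hF0 : ∀ t ∈ Icc a b, 0 ≤ F t)
    (hsteep : ∀ t ∈ Icc a b, ε * F t ≤ G t ^ 2) (hG : IntegrableOn G (Icc a b)) :
    ∫ t in a..b, G t ≤ 2 / √ε * √(F a) := by
  have hlim : Tendsto (fun δ => √(F a + δ * exp (-ε * a))) (𝓝[>] 0) (𝓝 √(F a)) := by
    have hcont : Continuous fun δ => √(F a + δ * exp (-ε * a)) := by fun_prop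
    simpa using (hcont.tendsto 0).mono_left nhdsWithin_le_nhds
  have h : √ε / 2 * ∫ t in a..b, G t ≤ √(F a) :=
    ge_of_tendsto hlim <| eventually_mem_nhdsWithin.mono fun δ hδ =>
      sqrt_mul_integral_le_sqrt_add_of_hasDerivAt_neg_sq hε hab hF hF0 hsteep hG hδ
  rw [div_mul_eq_mul_div, le_div_iff₀ (sqrt_pos.2 hε)]
  linarith

end Lojasiewicz

theorem lintegral_Ioi_enorm_le_of_intervalIntegral_norm_le {E : Type*} [NormedAddCommGroup E]
    {h : ℝ → E} {a B : ℝ} (hh : ContinuousOn h (Ici a))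
    (hB : ∀ b, a ≤ b → ∫ t in a..b, ‖h t‖ ≤ B) :
    ∫⁻ t in Ioi a, ‖h t‖ₑ ≤ ENNReal.ofReal B := by
  have hloc : ∀ b, IntegrableOn h (Ioc a b) := fun b =>
    (hh.mono Icc_subset_Ici_self).integrableOn_Icc.mono_set Ioc_subset_Icc_self
  have hint : IntegrableOn h (Ioi a) :=
    integrableOn_Ioi_of_intervalIntegral_norm_bounded B a hloc tendsto_id
      (eventually_ge_atTop a |>.mono hB)
  rw [← ofReal_integral_norm_eq_lintegral_enorm hint]
  exact ENNReal.ofReal_le_ofReal <| le_of_tendsto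
    (intervalIntegral_tendsto_integral_Ioi a hint.norm tendsto_id)
    (eventually_ge_atTop a |>.mono hB)

/-- Gradient flow of a nonnegative C¹ function f with ‖∇f‖² ≥ ε f decays
exponentially, f(γ(t)) ≤ f(γ(0)) e^{−εt}, and the flow line has finite total
length, bounded by C·√(f(γ(0))) with C = (1−e^{−ε})^{1/2}/(1−e^{−ε/2}). -/
theorem gradient_flow_exponential_decay_and_finite_length
    {n : ℕ} (f : EuclideanSpace ℝ (Fin n) → ℝ) (hf : ContDiff ℝ 1 f)
    (hf0 : ∀ x, 0 ≤ f x) (ε : ℝ) (hε : 0 < ε)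
    (hsteep : ∀ x, ε * f x ≤ ‖gradient f x‖ ^ 2)
    (γ : ℝ → EuclideanSpace ℝ (Fin n))
    (hγ : ∀ t : ℝ, 0 ≤ t → HasDerivAt γ (-(gradient f (γ t))) t) :
    (∀ t : ℝ, 0 ≤ t → f (γ t) ≤ f (γ 0) * Real.exp (-ε * t)) ∧
    (∫⁻ t in Set.Ioi (0 : ℝ), (‖gradient f (γ t)‖₊ : ENNReal)
      ≤ ENNReal.ofReal
          ((Real.sqrt (1 - Real.exp (-ε)) / (1 - Real.exp (-ε / 2)))
            * Real.sqrt (f (γ 0)))) := by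
  have hflow : ∀ t, 0 ≤ t → HasDerivAt (fun s => f (γ s)) (-‖gradient f (γ t)‖ ^ 2) t :=
    fun t ht => ((hf.differentiable one_ne_zero _).hasGradientAt.hasDerivAt_comp
      (hγ t ht)).congr_deriv (by rw [inner_neg_right, real_inner_self_eq_norm_sq])
  have hgrad : ContinuousOn (fun t => gradient f (γ t)) (Ici 0) :=
    hf.continuous_gradient.comp_continuousOn fun t ht => (hγ t ht).continuousAt.continuousWithinAt
  refine ⟨fun t ht => le_mul_exp_neg_of_hasDerivAt_le hflow
    (fun s _ => by linarith [hsteep (γ s)]) ht, ?_⟩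
  have hlength : ∀ b, 0 ≤ b → ∫ t in 0..b, ‖gradient f (γ t)‖ ≤ 2 / √ε * √(f (γ 0)) :=
    fun b hb => integral_le_two_div_sqrt_mul_sqrt_of_hasDerivAt_neg_sq hε hb
      (fun t ht => hflow t ht.1) (fun _ _ => hf0 _) (fun _ _ => hsteep _)
      (hgrad.norm.mono Icc_subset_Ici_self).integrableOn_Icc
  exact (lintegral_Ioi_enorm_le_of_intervalIntegral_norm_le hgrad hlength).trans <|
    ENNReal.ofReal_le_ofReal <| mul_le_mul_of_nonneg_right
      (two_div_sqrt_le_sqrt_one_sub_exp_neg_div hε) (sqrt_nonneg _)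
end

section
/- Let V be a finite-dimensional vector space over a field of characteristic 0 and N : V → V a nilpotent endomorphism with N^{d+1} = 0 and N^d ≠ 0. Then there exists a unique increasing filtration {0} ⊆ W_{−d} ⊆ W_{−d+1} ⊆ ⋯ ⊆ W_{d−1} ⊆ W_d = V of subspaces such that: (a) N(W_i) ⊆ W_{i−2} for all i; and (b) for each i = 1, …, d, the induced map N^i : W_i/W_{i−1} → W_{−i}/W_{−i−1} is an isomorphism. -/
open Submodule LinearMap Module

namespace MWF

variable {K V : Type*} [Field K] [AddCommGroup V] [Module K V]

/-- The candidate weight filtration: `F N k = ⨆ j, N^j (ker N^{k+2j+1})`. -/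
noncomputable def F (N : V →ₗ[K] V) (k : ℤ) : Submodule K V :=
  ⨆ j : ℕ, (LinearMap.ker (N ^ (k + 2 * j + 1).toNat)).map (N ^ j)

lemma ker_pow_le (N : V →ₗ[K] V) {a b : ℕ} (h : a ≤ b) :
    LinearMap.ker (N ^ a) ≤ LinearMap.ker (N ^ b) := by
  intro x hx
  rw [LinearMap.mem_ker] at hx ⊢
  obtain ⟨c, rfl⟩ := Nat.exists_eq_add_of_le h
  rw [add_comm, pow_add, Module.End.mul_apply, hx, map_zero]

lemma F_mono (N : V →ₗ[K] V) {i j : ℤ} (h : i ≤ j) : F N i ≤ F N j := by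
  apply iSup_mono
  intro t
  exact Submodule.map_mono (ker_pow_le N (by omega))

lemma pow_eq_zero_of_ge {d : ℕ} (N : V →ₗ[K] V) (hnil : N ^ (d + 1) = 0)
    {j : ℕ} (hj : d + 1 ≤ j) : N ^ j = 0 := by
  have : N ^ j = N ^ (d + 1) * N ^ (j - (d + 1)) := by
    rw [← pow_add]; congr 1; omega
  rw [this, hnil, zero_mul]

lemma F_bot {d : ℕ} (N : V →ₗ[K] V) (hnil : N ^ (d + 1) = 0)
    (k : ℤ) (hk : k < -(d : ℤ)) : F N k = ⊥ := by
  rw [F, iSup_eq_bot]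
  intro j
  rw [← LinearMap.le_ker_iff_map]
  rcases le_or_gt j d with hj | hj
  · exact ker_pow_le N (by omega)
  · rw [pow_eq_zero_of_ge N hnil (by omega : d + 1 ≤ j), LinearMap.ker_zero]
    exact le_top

lemma F_top {d : ℕ} (N : V →ₗ[K] V) (hnil : N ^ (d + 1) = 0)
    (k : ℤ) (hk : (d : ℤ) ≤ k) : F N k = ⊤ := by
  rw [eq_top_iff]
  have h1 : LinearMap.ker (N ^ (k + 2 * (0 : ℕ) + 1).toNat) = ⊤ := by
    rw [eq_top_iff]
    have h2 : LinearMap.ker (N ^ (d + 1)) = ⊤ := by rw [hnil]; exact LinearMap.ker_zero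
    rw [← h2]
    exact ker_pow_le N (by omega)
  have h3 : (⊤ : Submodule K V) = (LinearMap.ker (N ^ (k + 2 * (0:ℕ) + 1).toNat)).map (N ^ (0:ℕ)) := by
    rw [h1, pow_zero]; simp [Module.End.one_eq_id]
  rw [h3]
  exact le_iSup (fun j : ℕ => (LinearMap.ker (N ^ (k + 2 * j + 1).toNat)).map (N ^ j)) 0

lemma F_map (N : V →ₗ[K] V) (k : ℤ) : (F N k).map N ≤ F N (k - 2) := by
  rw [F, Submodule.map_iSup]
  apply iSup_le
  intro j
  have h1 : Submodule.map N (Submodule.map (N ^ j) (LinearMap.ker (N ^ (k + 2 * j + 1).toNat)))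
      = (LinearMap.ker (N ^ (k - 2 + 2 * (j+1 : ℕ) + 1).toNat)).map (N ^ (j+1)) := by
    rw [← Submodule.map_comp, ← Module.End.mul_eq_comp, ← pow_succ']
    congr 3
    omega
  rw [h1]
  exact le_iSup (fun j : ℕ => (LinearMap.ker (N ^ (k - 2 + 2 * j + 1).toNat)).map (N ^ j)) (j+1)

lemma F_neg_le (N : V →ₗ[K] V) (i : ℕ) :
    F N (-(i : ℤ)) ≤ (F N (i : ℤ)).map (N ^ i) := by
  rw [F]
  apply iSup_le
  intro j
  rcases lt_or_ge j i with hj | hj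
  · have hb : Submodule.map (N ^ j) (LinearMap.ker (N ^ (-(i:ℤ) + 2 * j + 1).toNat)) = ⊥ := by
      rw [← LinearMap.le_ker_iff_map]
      exact ker_pow_le N (by omega)
    rw [hb]; exact bot_le
  · have hsplit : N ^ j = N ^ i * N ^ (j - i) := by rw [← pow_add]; congr 1; omega
    have hidx : (-(i:ℤ) + 2 * j + 1).toNat = ((i:ℤ) + 2 * (j - i : ℕ) + 1).toNat := by
      congr 1
      have : ((j - i : ℕ) : ℤ) = (j : ℤ) - (i : ℤ) := by omega
      rw [this]; ring
    rw [hsplit, Module.End.mul_eq_comp, Submodule.map_comp, hidx]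
    apply Submodule.map_mono
    exact le_iSup (fun t : ℕ => (LinearMap.ker (N ^ ((i:ℤ) + 2 * t + 1).toNat)).map (N ^ t)) (j - i)

lemma ker_le_F (N : V →ₗ[K] V) (t : ℕ) :
    LinearMap.ker (N ^ t) ≤ F N ((t : ℤ) - 1) := by
  have h : LinearMap.ker (N ^ t)
      = (LinearMap.ker (N ^ (((t:ℤ) - 1) + 2 * (0:ℕ) + 1).toNat)).map (N ^ (0:ℕ)) := by
    have : (((t:ℤ) - 1) + 2 * (0:ℕ) + 1).toNat = t := by omega
    rw [this, pow_zero]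
    simp [Module.End.one_eq_id]
  rw [h]
  exact le_iSup (fun j : ℕ => (LinearMap.ker (N ^ (((t:ℤ)-1) + 2 * j + 1).toNat)).map (N ^ j)) 0

lemma map_pow_le (N : V →ₗ[K] V) (W : ℤ → Submodule K V)
    (hmap : ∀ i : ℤ, (W i).map N ≤ W (i - 2)) (j : ℕ) :
    ∀ m : ℤ, (W m).map (N ^ j) ≤ W (m - 2 * j) := by
  induction j with
  | zero =>
    intro m
    simp only [pow_zero, Nat.cast_zero, mul_zero, sub_zero]
    simp [Module.End.one_eq_id]
  | succ j ih =>
    intro m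
    have h1 : N ^ (j + 1) = N ^ j * N := pow_succ N j
    rw [h1, Module.End.mul_eq_comp, Submodule.map_comp]
    have h2 : Submodule.map (N ^ j) (Submodule.map N (W m)) ≤ Submodule.map (N ^ j) (W (m - 2)) :=
      Submodule.map_mono (hmap m)
    refine h2.trans ((ih (m - 2)).trans ?_)
    have : m - 2 - 2 * (j : ℤ) = m - 2 * ((j : ℕ) + 1 : ℕ) := by push_cast; ring
    rw [this]

lemma finrank_map_add [FiniteDimensional K V] (f : V →ₗ[K] V) (A : Submodule K V) :
    Module.finrank K (A.map f) + Module.finrank K ↥(A ⊓ LinearMap.ker f)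
      = Module.finrank K A := by
  have h := LinearMap.finrank_range_add_finrank_ker (f.domRestrict A)
  rw [LinearMap.range_domRestrict, LinearMap.ker_domRestrict] at h
  have e : Submodule.comap A.subtype (LinearMap.ker f)
      = Submodule.comap A.subtype (A ⊓ LinearMap.ker f) := by
    rw [Submodule.comap_inf, Submodule.comap_subtype_self, top_inf_eq]
  rw [e] at h
  have e2 := (Submodule.comapSubtypeEquivOfLe (inf_le_left : A ⊓ LinearMap.ker f ≤ A)).finrank_eq
  rw [e2] at h
  exact h

lemma rank_aux [FiniteDimensional K V] (f : V →ₗ[K] V) (A B : Submodule K V) :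
    Module.finrank K ↥(A ⊓ Submodule.comap f B) + Module.finrank K ↥(A.map f ⊔ B)
      = Module.finrank K A + Module.finrank K B := by
  set C := A ⊓ Submodule.comap f B with hC
  have h1 : C.map f = A.map f ⊓ B := by
    apply le_antisymm
    · rintro v hv
      rw [Submodule.mem_map] at hv
      obtain ⟨u, hu, rfl⟩ := hv
      rw [hC, Submodule.mem_inf, Submodule.mem_comap] at hu
      exact ⟨Submodule.mem_map_of_mem hu.1, hu.2⟩
    · intro v hv
      rw [Submodule.mem_inf] at hv
      obtain ⟨hv1, hv2⟩ := hv
      rw [Submodule.mem_map] at hv1 ⊢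
      obtain ⟨u, hu, rfl⟩ := hv1
      exact ⟨u, ⟨hu, hv2⟩, rfl⟩
  have h2 : C ⊓ LinearMap.ker f = A ⊓ LinearMap.ker f := by
    apply le_antisymm
    · exact inf_le_inf_right _ inf_le_left
    · intro u hu
      rw [Submodule.mem_inf] at hu
      obtain ⟨hu1, hu2⟩ := hu
      have hu2' : f u = 0 := hu2
      rw [Submodule.mem_inf, hC, Submodule.mem_inf]
      exact ⟨⟨hu1, by rw [Submodule.mem_comap, hu2']; exact B.zero_mem⟩, hu2⟩
  have r1 := finrank_map_add f C
  have r2 := finrank_map_add f A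
  have r3 := Submodule.finrank_sup_add_finrank_inf_eq (A.map f) B
  rw [h1, h2] at r1
  omega

section WAx

variable {d : ℕ} (N : V →ₗ[K] V) (W : ℤ → Submodule K V)

lemma ker_le_W
    (htop : ∀ i : ℤ, (d : ℤ) ≤ i → W i = ⊤)
    (hiso : ∀ i : ℕ, 1 ≤ i → i ≤ d →
      (∀ u ∈ W (i : ℤ), (N ^ i) u ∈ W (-(i : ℤ) - 1) → u ∈ W ((i : ℤ) - 1)) ∧
      (∀ v ∈ W (-(i : ℤ)), ∃ u ∈ W (i : ℤ), v - (N ^ i) u ∈ W (-(i : ℤ) - 1)))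
    (t : ℕ) : LinearMap.ker (N ^ t) ≤ W ((t : ℤ) - 1) := by
  have main : ∀ s t : ℕ, d + 1 ≤ t + s → LinearMap.ker (N ^ t) ≤ W ((t : ℤ) - 1) := by
    intro s
    induction s with
    | zero =>
      intro t ht
      rw [htop ((t : ℤ) - 1) (by omega)]
      exact le_top
    | succ s ih =>
      intro t ht
      rcases le_or_gt (d + 1) (t + s) with h' | h'
      · exact ih t h'
      · rcases Nat.eq_zero_or_pos t with rfl | htpos
        · intro u hu
          rw [pow_zero, LinearMap.mem_ker, Module.End.one_apply] at hu
          subst hu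
          exact (W (-1 : ℤ)).zero_mem
        · intro u hu
          have h1 : u ∈ LinearMap.ker (N ^ (t + 1)) := ker_pow_le N (Nat.le_succ t) hu
          have h2 : u ∈ W ((t : ℤ)) := by
            have := ih (t + 1) (by omega) h1
            have e : ((t + 1 : ℕ) : ℤ) - 1 = (t : ℤ) := by push_cast; ring
            rwa [e] at this
          have h3 : (N ^ t) u = 0 := hu
          exact (hiso t htpos (by omega)).1 u h2 (by rw [h3]; exact (W _).zero_mem)
  exact main (d + 1) t (by omega)

lemma rel [FiniteDimensional K V]
    (hmono : ∀ i j : ℤ, i ≤ j → W i ≤ W j)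
    (hmap : ∀ i : ℤ, (W i).map N ≤ W (i - 2))
    (hiso : ∀ i : ℕ, 1 ≤ i → i ≤ d →
      (∀ u ∈ W (i : ℤ), (N ^ i) u ∈ W (-(i : ℤ) - 1) → u ∈ W ((i : ℤ) - 1)) ∧
      (∀ v ∈ W (-(i : ℤ)), ∃ u ∈ W (i : ℤ), v - (N ^ i) u ∈ W (-(i : ℤ) - 1)))
    (i : ℕ) (h1 : 1 ≤ i) (h2 : i ≤ d) :
    Module.finrank K (W ((i : ℤ) - 1)) + Module.finrank K (W (-(i : ℤ)))
      = Module.finrank K (W (i : ℤ)) + Module.finrank K (W (-(i : ℤ) - 1)) := by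
  have e1 : W ((i : ℤ) - 1) = W (i : ℤ) ⊓ Submodule.comap (N ^ i) (W (-(i : ℤ) - 1)) := by
    apply le_antisymm
    · refine le_inf (hmono _ _ (by omega)) ?_
      rw [← Submodule.map_le_iff_le_comap]
      refine (map_pow_le N W hmap i ((i : ℤ) - 1)).trans ?_
      apply hmono
      omega
    · intro u hu
      rw [Submodule.mem_inf, Submodule.mem_comap] at hu
      exact (hiso i h1 h2).1 u hu.1 hu.2
  have e2 : W (-(i : ℤ)) = (W (i : ℤ)).map (N ^ i) ⊔ W (-(i : ℤ) - 1) := by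
    apply le_antisymm
    · intro v hv
      obtain ⟨u, hu, hr⟩ := (hiso i h1 h2).2 v hv
      rw [Submodule.mem_sup]
      exact ⟨(N ^ i) u, Submodule.mem_map_of_mem hu, v - (N ^ i) u, hr, by abel⟩
    · apply sup_le
      · refine (map_pow_le N W hmap i (i : ℤ)).trans ?_
        apply hmono
        omega
      · exact hmono _ _ (by omega)
  rw [e1, e2]
  exact rank_aux (N ^ i) (W (i : ℤ)) (W (-(i : ℤ) - 1))

lemma F_le_W
    (htop : ∀ i : ℤ, (d : ℤ) ≤ i → W i = ⊤)
    (hmap : ∀ i : ℤ, (W i).map N ≤ W (i - 2))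
    (hiso : ∀ i : ℕ, 1 ≤ i → i ≤ d →
      (∀ u ∈ W (i : ℤ), (N ^ i) u ∈ W (-(i : ℤ) - 1) → u ∈ W ((i : ℤ) - 1)) ∧
      (∀ v ∈ W (-(i : ℤ)), ∃ u ∈ W (i : ℤ), v - (N ^ i) u ∈ W (-(i : ℤ) - 1)))
    (k : ℤ) : F N k ≤ W k := by
  apply iSup_le
  intro j
  rcases le_or_gt (k + 2 * j + 1) 0 with h | h
  · have ht : (k + 2 * j + 1).toNat = 0 := by omega
    rw [ht, pow_zero]
    have : LinearMap.ker (1 : V →ₗ[K] V) = ⊥ := by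
      rw [Module.End.one_eq_id, LinearMap.ker_id]
    rw [this, Submodule.map_bot]
    exact bot_le
  · refine (Submodule.map_mono (ker_le_W N W htop hiso ((k + 2 * j + 1).toNat))).trans ?_
    refine (map_pow_le N W hmap j _).trans ?_
    have e : ((k + 2 * j + 1).toNat : ℤ) - 1 - 2 * (j : ℕ) = k := by omega
    rw [e]

lemma slem [FiniteDimensional K V]
    (hmono : ∀ i j : ℤ, i ≤ j → W i ≤ W j)
    (hbot : ∀ i : ℤ, i < -(d : ℤ) → W i = ⊥)
    (htop : ∀ i : ℤ, (d : ℤ) ≤ i → W i = ⊤)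
    (hmap : ∀ i : ℤ, (W i).map N ≤ W (i - 2))
    (hiso : ∀ i : ℕ, 1 ≤ i → i ≤ d →
      (∀ u ∈ W (i : ℤ), (N ^ i) u ∈ W (-(i : ℤ) - 1) → u ∈ W ((i : ℤ) - 1)) ∧
      (∀ v ∈ W (-(i : ℤ)), ∃ u ∈ W (i : ℤ), v - (N ^ i) u ∈ W (-(i : ℤ) - 1)))
    (i : ℕ) (h1 : 1 ≤ i) (h2 : i ≤ d + 1) :
    Module.finrank K (W ((i : ℤ) - 1)) + Module.finrank K (W (-(i : ℤ)))
      = Module.finrank K V := by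
  have main : ∀ s i : ℕ, 1 ≤ i → i ≤ d + 1 → d + 1 ≤ i + s →
      Module.finrank K (W ((i : ℤ) - 1)) + Module.finrank K (W (-(i : ℤ)))
        = Module.finrank K V := by
    intro s
    induction s with
    | zero =>
      intro i hi1 hi2 hi3
      have hieq : i = d + 1 := by omega
      subst hieq
      have e1 : W (((d + 1 : ℕ) : ℤ) - 1) = ⊤ := htop _ (by push_cast; omega)
      have e2 : W (-((d + 1 : ℕ) : ℤ)) = ⊥ := hbot _ (by push_cast; omega)
      rw [e1, e2]
      simp
    | succ s ih =>
      intro i hi1 hi2 hi3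
      rcases le_or_gt (d + 1) (i + s) with h' | h'
      · exact ih i hi1 hi2 h'
      · have hid : i ≤ d := by omega
        have hr := rel N W hmono hmap hiso i hi1 hid
        have hs := ih (i + 1) (by omega) (by omega) (by omega)
        have e1 : ((i + 1 : ℕ) : ℤ) - 1 = (i : ℤ) := by push_cast; ring
        have e2 : -((i + 1 : ℕ) : ℤ) = -(i : ℤ) - 1 := by push_cast; ring
        rw [e1, e2] at hs
        omega
  exact main (d + 1) i h1 h2 (by omega)

end WAx

end MWF

/-- Existence and uniqueness of the monodromy weight filtration of a nilpotent
endomorphism N with N^{d+1} = 0, N^d ≠ 0, over a field of characteristic 0: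
there is a unique increasing filtration (W_i), with W_i = 0 for i < −d and
W_i = V for i ≥ d, such that N(W_i) ⊆ W_{i−2} and, for 1 ≤ i ≤ d, the induced
map N^i : W_i/W_{i−1} → W_{−i}/W_{−i−1} is an isomorphism (expressed below as
injectivity and surjectivity of the induced map). -/
theorem monodromy_weight_filtration_exists_unique
    {K V : Type*} [Field K] [CharZero K] [AddCommGroup V] [Module K V]
    [FiniteDimensional K V] (N : V →ₗ[K] V) (d : ℕ)
    (hnil : N ^ (d + 1) = 0) (hne : N ^ d ≠ 0) :
    ∃! W : ℤ → Submodule K V,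
      (∀ i j : ℤ, i ≤ j → W i ≤ W j) ∧
      (∀ i : ℤ, i < -(d : ℤ) → W i = ⊥) ∧
      (∀ i : ℤ, (d : ℤ) ≤ i → W i = ⊤) ∧
      (∀ i : ℤ, (W i).map N ≤ W (i - 2)) ∧
      (∀ i : ℕ, 1 ≤ i → i ≤ d →
        (∀ u ∈ W (i : ℤ), (N ^ i) u ∈ W (-(i : ℤ) - 1) → u ∈ W ((i : ℤ) - 1)) ∧
        (∀ v ∈ W (-(i : ℤ)), ∃ u ∈ W (i : ℤ),
          v - (N ^ i) u ∈ W (-(i : ℤ) - 1))) := by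
  classical
  -- the isomorphism condition for F
  have hisoF : ∀ i : ℕ, 1 ≤ i → i ≤ d →
      (∀ u ∈ MWF.F N (i : ℤ), (N ^ i) u ∈ MWF.F N (-(i : ℤ) - 1) →
        u ∈ MWF.F N ((i : ℤ) - 1)) ∧
      (∀ v ∈ MWF.F N (-(i : ℤ)), ∃ u ∈ MWF.F N (i : ℤ),
        v - (N ^ i) u ∈ MWF.F N (-(i : ℤ) - 1)) := by
    intro i hi1 hi2
    constructor
    · intro u hu hNu
      have e : -(i : ℤ) - 1 = -((i + 1 : ℕ) : ℤ) := by push_cast; ring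
      rw [e] at hNu
      have hNu' := MWF.F_neg_le N (i + 1) hNu
      rw [Submodule.mem_map] at hNu'
      obtain ⟨y, hy, hyeq⟩ := hNu'
      have hker : u - N y ∈ LinearMap.ker (N ^ i) := by
        rw [LinearMap.mem_ker, map_sub]
        have : (N ^ i) (N y) = (N ^ (i + 1)) y := by
          rw [pow_succ, Module.End.mul_apply]
        rw [this, hyeq, sub_self]
      have h1 : u - N y ∈ MWF.F N ((i : ℤ) - 1) := MWF.ker_le_F N i hker
      have h2 : N y ∈ MWF.F N ((i : ℤ) - 1) := by
        have hm : N y ∈ (MWF.F N ((i + 1 : ℕ) : ℤ)).map N := Submodule.mem_map_of_mem hy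
        have := MWF.F_map N ((i + 1 : ℕ) : ℤ) hm
        have e2 : ((i + 1 : ℕ) : ℤ) - 2 = (i : ℤ) - 1 := by push_cast; ring
        rwa [e2] at this
      have := Submodule.add_mem _ h1 h2
      rwa [sub_add_cancel] at this
    · intro v hv
      have hv' := MWF.F_neg_le N i hv
      rw [Submodule.mem_map] at hv'
      obtain ⟨u, hu, hueq⟩ := hv'
      exact ⟨u, hu, by rw [hueq, sub_self]; exact (MWF.F N _).zero_mem⟩
  refine ⟨fun k => MWF.F N k, ⟨?_, ?_, ?_, ?_, ?_⟩, ?_⟩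
  · exact fun i j h => MWF.F_mono N h
  · exact fun i h => MWF.F_bot N hnil i h
  · exact fun i h => MWF.F_top N hnil i h
  · exact fun i => MWF.F_map N i
  · exact hisoF
  · intro W hW
    obtain ⟨hmono, hbot, htop, hmap, hiso⟩ := hW
    -- main claim for indices in range
    have claim : ∀ i : ℕ, 1 ≤ i → i ≤ d →
        W ((i : ℤ) - 1) = MWF.F N ((i : ℤ) - 1) ∧ W (-(i : ℤ)) = MWF.F N (-(i : ℤ)) := by
      intro i h1 h2
      have sW := MWF.slem N W hmono hbot htop hmap hiso i h1 (by omega)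
      have sF : Module.finrank K (MWF.F N ((i : ℤ) - 1)) + Module.finrank K (MWF.F N (-(i : ℤ)))
          = Module.finrank K V :=
        MWF.slem N (fun k => MWF.F N k) (fun i j h => MWF.F_mono N h)
        (fun i h => MWF.F_bot N hnil i h) (fun i h => MWF.F_top N hnil i h)
        (fun i => MWF.F_map N i) hisoF i h1 (by omega)
      have le1 : MWF.F N ((i : ℤ) - 1) ≤ W ((i : ℤ) - 1) :=
        MWF.F_le_W N W htop hmap hiso _
      have le2 : MWF.F N (-(i : ℤ)) ≤ W (-(i : ℤ)) :=
        MWF.F_le_W N W htop hmap hiso _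
      have m1 := Submodule.finrank_mono le1
      have m2 := Submodule.finrank_mono le2
      constructor
      · exact (Submodule.eq_of_le_of_finrank_eq le1 (by omega)).symm
      · exact (Submodule.eq_of_le_of_finrank_eq le2 (by omega)).symm
    funext k
    rcases le_or_gt (d : ℤ) k with hk | hk
    · rw [htop k hk, MWF.F_top N hnil k hk]
    rcases lt_or_ge k (-(d : ℤ)) with hk2 | hk2
    · rw [hbot k hk2, MWF.F_bot N hnil k hk2]
    rcases le_or_gt 0 k with hk3 | hk3
    · -- k = (k.toNat + 1) - 1
      have h1 : (1 : ℕ) ≤ k.toNat + 1 := by omega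
      have h2 : k.toNat + 1 ≤ d := by omega
      have e : ((k.toNat + 1 : ℕ) : ℤ) - 1 = k := by omega
      have := (claim (k.toNat + 1) h1 h2).1
      rwa [e] at this
    · -- k = -((-k).toNat)
      have h1 : (1 : ℕ) ≤ (-k).toNat := by omega
      have h2 : (-k).toNat ≤ d := by omega
      have e : -(((-k).toNat : ℕ) : ℤ) = k := by omega
      have := (claim (-k).toNat h1 h2).2
      rwa [e] at this
end
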